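/- If a Z-graded k-algebra A over a field is n-shifted selfdual, then A has non-degenerate products in degree n. -/

import Mathlib

/-!
Write `⟪x, y⟫ = Φ x y` for the pairing `A^{n+i} × A^{-i} → k` given by the selfduality, so
that `⟪a x, y⟫ = ⟪x, y a⟫`. If `a ∈ A^i` kills `A^{n-i}` on the right, then taking `y = 1` gives
`⟪x, a⟫ = ⟪a x, 1⟫ = 0` for all `x ∈ A^{n-i}`, and since every functional on `A^i` is of the
form `⟪x, -⟫`, `a = 0`. If `a` kills `A^{n-i}` on the left, then taking `x = 1` gives
`⟪a, y⟫ = ⟪1, y a⟫ = 0`, and since `Φ` is injective, `a = 0`.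
-/

variable {k A : Type} [Field k] [Ring A] [Algebra k A]

/-- `A` is `n`-shifted selfdual: there is an isomorphism `A[n] ≅ D A` of graded left
`A`-modules, given by a family of `k`-linear isomorphisms
`Φ i : A^{n+i} → Hom_k(A^{-i}, k)` satisfying `Φ (a * x) (y) = Φ (x) (y * a)` for
homogeneous `a`. -/
def IsShiftedSelfdual (𝒜 : ℤ → Submodule k A) (n : ℤ) : Prop :=
  ∃ Φ : ∀ i : ℤ, (𝒜 (n + i)) ≃ₗ[k] Module.Dual k (𝒜 (-i)),
    ∀ (i j : ℤ) (a x y : A), a ∈ 𝒜 j → ∀ (hx : x ∈ 𝒜 (n + i))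
      (hy : y ∈ 𝒜 (-(i + j))) (hax : a * x ∈ 𝒜 (n + (i + j))) (hya : y * a ∈ 𝒜 (-i)),
      Φ (i + j) ⟨a * x, hax⟩ ⟨y, hy⟩ = Φ i ⟨x, hx⟩ ⟨y * a, hya⟩

/-- `A` has non-degenerate products in degree `n`. -/
def NondegProducts (𝒜 : ℤ → Submodule k A) (n : ℤ) : Prop :=
  ∀ i : ℤ, ∀ a ∈ 𝒜 i, a ≠ 0 →
    (∃ b ∈ 𝒜 (n - i), a * b ≠ 0) ∧ ∃ c ∈ 𝒜 (n - i), c * a ≠ 0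

namespace IsShiftedSelfdual

variable {𝒜 : ℤ → Submodule k A} [SetLike.GradedMonoid 𝒜] {n i : ℤ} {a : A}

theorem eq_zero_of_mul_right_eq_zero (h : IsShiftedSelfdual 𝒜 n) (ha : a ∈ 𝒜 i)
    (hb : ∀ b ∈ 𝒜 (n - i), a * b = 0) : a = 0 := by
  obtain ⟨Φ, hΦ⟩ := h
  have ha' : a ∈ 𝒜 (-(-i)) := by rwa [neg_neg]
  suffices (⟨a, ha'⟩ : 𝒜 (-(-i))) = 0 from congrArg Subtype.val this
  refine (Module.forall_dual_apply_eq_zero_iff k _).mp fun φ => ?_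
  obtain ⟨x, rfl⟩ := (Φ (-i)).surjective φ
  have hone : (1 : A) ∈ 𝒜 (-(-i + i)) := by simpa using SetLike.one_mem_graded 𝒜
  have hax : a * x ∈ 𝒜 (n + (-i + i)) := by
    convert SetLike.mul_mem_graded ha x.2 using 2; ring
  have hax0 : a * x = 0 := hb x x.2
  have := hΦ (-i) i a x 1 ha x.2 hone hax (by rwa [one_mul])
  rw [(Submodule.mk_eq_zero _ hax).mpr hax0, map_zero] at this
  simpa using this.symm

theorem eq_zero_of_mul_left_eq_zero (h : IsShiftedSelfdual 𝒜 n) (ha : a ∈ 𝒜 i)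
    (hc : ∀ c ∈ 𝒜 (n - i), c * a = 0) : a = 0 := by
  obtain ⟨Φ, hΦ⟩ := h
  have ha' : a ∈ 𝒜 (n + (-n + i)) := by rwa [add_neg_cancel_left]
  suffices (⟨a, ha'⟩ : 𝒜 (n + (-n + i))) = 0 from congrArg Subtype.val this
  refine (Φ (-n + i)).map_eq_zero_iff.mp (LinearMap.ext fun ⟨y, hy⟩ => ?_)
  have hone : (1 : A) ∈ 𝒜 (n + -n) := by simpa using SetLike.one_mem_graded 𝒜
  have hya : y * a ∈ 𝒜 (-(-n)) := by
    convert SetLike.mul_mem_graded hy ha using 2; ring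
  have hya0 : y * a = 0 := hc y (by convert hy using 2; ring)
  have := hΦ (-n) i a 1 y ha hone hy (by rwa [mul_one]) hya
  rw [(Submodule.mk_eq_zero _ hya).mpr hya0, map_zero] at this
  simpa using this

end IsShiftedSelfdual

/-- An `n`-shifted selfdual `ℤ`-graded algebra over a field has
non-degenerate products in degree `n`. -/
theorem nondegProducts_of_shiftedSelfdual
    (𝒜 : ℤ → Submodule k A) [GradedRing 𝒜] (n : ℤ)
    (h : IsShiftedSelfdual 𝒜 n) : NondegProducts 𝒜 n := by
  intro i a ha ha0
  constructor <;> by_contra! hmul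
  · exact ha0 (h.eq_zero_of_mul_right_eq_zero ha hmul)
  · exact ha0 (h.eq_zero_of_mul_left_eq_zero ha hmul)
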